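/- Let k be an algebraically closed field of characteristic 0, and let a, b ∈ kˣ be elements that are not roots of unity such that the subgroup {(m, n) ∈ ℤ² : aᵐ = bⁿ} of ℤ² is nontrivial; let (r₁, r₂) be a pair of positive integers generating this subgroup. Let (x₀, y₀) ∈ k² with x₀ y₀ ≠ 0. Then the Zariski closure in k² of the orbit {(aⁿ x₀, bⁿ y₀) : n ∈ ℕ} equals the zero locus {(x, y) ∈ k² : y₀^{r₂} x^{r₁} − x₀^{r₁} y^{r₂} = 0}. -/

import Mathlib

/-!
Write `r₁ = e₁ d`, `r₂ = e₂ d` with `e₁, e₂` coprime. The generating hypothesis makes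
`ω = a^e₁ / b^e₂` a primitive `d`-th root of unity, and since every `d`-th root of unity is a
power `ωⁿ`, every point of the curve `y₀^r₂ x^r₁ = x₀^r₁ y^r₂` lies on one of the monomial
curves `t ↦ (aⁿ x₀ t^e₂, bⁿ y₀ t^e₁)`. With `τ^e₂ = a^d`, `τ^e₁ = b^d`, this curve passes through
the orbit points of index `n + d j` at `t = τʲ`, which are infinitely many because `a` is not a
root of unity. A polynomial vanishing on the orbit therefore restricts to a one-variable
polynomial with infinitely many roots on each of these curves, hence vanishes on the whole curve.
-/

open MvPolynomial

/-- The Zariski closure of a subset of the plane: the common zero locus of all polynomials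
vanishing on the subset. -/
def zariskiClosure {k : Type*} [Field k] (S : Set (Fin 2 → k)) : Set (Fin 2 → k) :=
  {p | ∀ f : MvPolynomial (Fin 2) k, (∀ q ∈ S, eval q f = 0) → eval p f = 0}

namespace MvPolynomial

variable {k σ : Type*} [Field k]

theorem eval_polynomial_eval_eq_zero_of_infinite (v : σ → Polynomial k)
    (g : MvPolynomial σ k) {S : Set k} (hS : S.Infinite)
    (hg : ∀ t ∈ S, eval (fun i => (v i).eval t) g = 0) (t : k) :
    eval (fun i => (v i).eval t) g = 0 := by
  have h_eval (t : k) : (aeval v g).eval t = eval (fun i => (v i).eval t) g := by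
    rw [aeval_def, polynomial_eval_eval₂, ← eval₂_id]
    congr 1
    ext c
    simp
  have h_zero : aeval v g = 0 :=
    Polynomial.eq_zero_of_infinite_isRoot _ <| hS.mono fun t ht => by
      simp only [Set.mem_ofPred_eq, Polynomial.IsRoot, h_eval, hg t ht]
  rw [← h_eval, h_zero, Polynomial.eval_zero]

theorem eval_monomialCurve_eq_zero_of_infinite (x y : k) (e₁ e₂ : ℕ)
    (g : MvPolynomial (Fin 2) k) {S : Set k} (hS : S.Infinite)
    (hg : ∀ t ∈ S, eval ![x * t ^ e₂, y * t ^ e₁] g = 0) (t : k) :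
    eval ![x * t ^ e₂, y * t ^ e₁] g = 0 := by
  have hv (t : k) : (fun i => (![Polynomial.C x * Polynomial.X ^ e₂,
      Polynomial.C y * Polynomial.X ^ e₁] i).eval t) = ![x * t ^ e₂, y * t ^ e₁] := by
    ext i; fin_cases i <;> simp
  have h := eval_polynomial_eval_eq_zero_of_infinite _ g hS (fun t ht => (hv t).symm ▸ hg t ht) t
  rwa [hv] at h

end MvPolynomial

section

variable {k : Type*} [Field k] {a b : kˣ} {d e₁ e₂ : ℕ}

theorem isPrimitiveRoot_div_pow_of_zpow_eq_zpow_iff (he₁ : e₁ ≠ 0)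
    (hgen : ∀ m n : ℤ, a ^ m = b ^ n ↔
      ∃ t : ℤ, m = t * ((e₁ * d : ℕ) : ℤ) ∧ n = t * ((e₂ * d : ℕ) : ℤ)) :
    IsPrimitiveRoot ((a : k) ^ e₁ / (b : k) ^ e₂) d := by
  have h_pow (l : ℕ) : ((a : k) ^ e₁ / (b : k) ^ e₂) ^ l = 1 ↔
      a ^ ((e₁ * l : ℕ) : ℤ) = b ^ ((e₂ * l : ℕ) : ℤ) := by
    rw [div_pow, div_eq_one_iff_eq (by simp), zpow_natCast, zpow_natCast, ← Units.val_inj]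
    push_cast
    rw [pow_mul, pow_mul]
  refine ⟨(h_pow d).2 ((hgen _ _).2 ⟨1, by push_cast; ring, by push_cast; ring⟩), fun l hl => ?_⟩
  obtain ⟨t, ht, -⟩ := (hgen _ _).1 ((h_pow l).1 hl)
  have hl : (l : ℤ) = d * t := by
    push_cast at ht
    exact mul_left_cancel₀ (Int.natCast_ne_zero.2 he₁) (by linarith)
  exact Int.natCast_dvd_natCast.1 ⟨t, hl⟩

theorem pow_eq_pow_of_isPrimitiveRoot_div_pow
    (hω : IsPrimitiveRoot ((a : k) ^ e₁ / (b : k) ^ e₂) d) :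
    (a : k) ^ (e₁ * d) = (b : k) ^ (e₂ * d) := by
  rw [pow_mul, pow_mul, ← div_eq_one_iff_eq (by simp), ← div_pow, hω.pow_eq_one]

theorem exists_eq_pow_mul_pow_of_isPrimitiveRoot_div_pow [NeZero d]
    (hω : IsPrimitiveRoot ((a : k) ^ e₁ / (b : k) ^ e₂) d) (he : e₁.Coprime e₂)
    {u v : k} (hv : v ≠ 0) (huv : u ^ (e₁ * d) = v ^ (e₂ * d)) :
    ∃ n : ℕ, ∃ s : k, u = a ^ n * s ^ e₂ ∧ v = b ^ n * s ^ e₁ := by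
  have hζ : (u ^ e₁ / v ^ e₂) ^ d = 1 := by
    rw [div_pow, ← pow_mul, ← pow_mul, huv, div_self (pow_ne_zero _ hv)]
  obtain ⟨n, -, hn⟩ := hω.eq_pow_of_pow_eq_one hζ
  have ha : (a : k) ^ n ≠ 0 := by simp
  have hb : (b : k) ^ n ≠ 0 := by simp
  obtain ⟨s, hus, hvs⟩ : ∃ s, u / a ^ n = s ^ e₂ ∧ v / b ^ n = s ^ e₁ := by
    refine (pow_eq_pow_iff_of_coprime he).1 ?_
    rw [div_pow, div_pow, div_eq_div_iff (pow_ne_zero _ ha) (pow_ne_zero _ hb)]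
    rw [div_pow, div_eq_div_iff (by simp) (pow_ne_zero _ hv)] at hn
    linear_combination -hn
  exact ⟨n, s, by rw [← hus, mul_div_cancel₀ _ ha], by rw [← hvs, mul_div_cancel₀ _ hb]⟩

theorem exists_eq_monomialCurve_of_mem_curve [NeZero d]
    (hω : IsPrimitiveRoot ((a : k) ^ e₁ / (b : k) ^ e₂) d) (he : e₁.Coprime e₂)
    (he₁ : e₁ ≠ 0) (he₂ : e₂ ≠ 0) {x₀ y₀ : k} (hx₀ : x₀ ≠ 0) (hy₀ : y₀ ≠ 0) {p : Fin 2 → k}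
    (hp : y₀ ^ (e₂ * d) * p 0 ^ (e₁ * d) - x₀ ^ (e₁ * d) * p 1 ^ (e₂ * d) = 0) :
    ∃ n : ℕ, ∃ t : k, p = ![a ^ n * x₀ * t ^ e₂, b ^ n * y₀ * t ^ e₁] := by
  by_cases hp₁ : p 1 = 0
  · have hp₀ : p 0 = 0 := by
      simpa [hp₁, hy₀, he₁, he₂, NeZero.ne d] using hp
    refine ⟨0, 0, ?_⟩
    ext i; fin_cases i <;> simp [hp₀, hp₁, he₁, he₂]
  · obtain ⟨n, s, hu, hv⟩ := exists_eq_pow_mul_pow_of_isPrimitiveRoot_div_pow hω he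
      (div_ne_zero hp₁ hy₀) (u := p 0 / x₀) (by
        rw [div_pow, div_pow, div_eq_div_iff (pow_ne_zero _ hx₀) (pow_ne_zero _ hy₀)]
        linear_combination hp)
    rw [div_eq_iff hx₀] at hu
    rw [div_eq_iff hy₀] at hv
    refine ⟨n, s, ?_⟩
    ext i; fin_cases i <;> simp [hu, hv] <;> ring

theorem eval_monomialCurve_eq_zero_of_forall_eval_orbit [NeZero d]
    (hω : IsPrimitiveRoot ((a : k) ^ e₁ / (b : k) ^ e₂) d) (he : e₁.Coprime e₂)
    (ha : ¬IsOfFinOrder a) {x₀ y₀ : k} {g : MvPolynomial (Fin 2) k}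
    (hg : ∀ n : ℕ, eval ![a ^ n * x₀, b ^ n * y₀] g = 0) (n : ℕ) (t : k) :
    eval ![a ^ n * x₀ * t ^ e₂, b ^ n * y₀ * t ^ e₁] g = 0 := by
  obtain ⟨τ, hτa, hτb⟩ : ∃ τ : k, (a : k) ^ d = τ ^ e₂ ∧ (b : k) ^ d = τ ^ e₁ := by
    refine (pow_eq_pow_iff_of_coprime he).1 ?_
    rw [← pow_mul, ← pow_mul, mul_comm d, mul_comm d, pow_eq_pow_of_isPrimitiveRoot_div_pow hω]
  have hτa' (j : ℕ) : (a : k) ^ (d * j) = (τ ^ j) ^ e₂ := by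
    rw [pow_mul, hτa, ← pow_mul, ← pow_mul, mul_comm]
  have hτb' (j : ℕ) : (b : k) ^ (d * j) = (τ ^ j) ^ e₁ := by
    rw [pow_mul, hτb, ← pow_mul, ← pow_mul, mul_comm]
  have hτ : Function.Injective fun j : ℕ => τ ^ j := by
    intro i j (hij : τ ^ i = τ ^ j)
    have h : a ^ (d * i) = a ^ (d * j) := Units.ext (by push_cast; rw [hτa', hτa', hij])
    exact Nat.eq_of_mul_eq_mul_left (Nat.pos_of_ne_zero (NeZero.ne d))
      (injective_pow_iff_not_isOfFinOrder.2 ha h)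
  refine eval_monomialCurve_eq_zero_of_infinite _ _ _ _ _ (Set.infinite_range_of_injective hτ) ?_ t
  rintro _ ⟨j, rfl⟩
  have h_orbit : ![a ^ n * x₀ * (τ ^ j) ^ e₂, b ^ n * y₀ * (τ ^ j) ^ e₁] =
      ![a ^ (n + d * j) * x₀, b ^ (n + d * j) * y₀] := by
    ext i; fin_cases i <;> simp [pow_add, hτa', hτb'] <;> ring
  simpa only [h_orbit] using hg (n + d * j)

end

theorem stmt19_general {k : Type*} [Field k]
    (a b : kˣ)
    (ha : ∀ m : ℕ, 0 < m → a ^ m ≠ 1)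
    (r₁ r₂ : ℕ) (hr₁ : 0 < r₁) (hr₂ : 0 < r₂)
    -- ((r₁, r₂) generates the subgroup {(m, n) ∈ ℤ² : aᵐ = bⁿ} of ℤ², which is in
    -- particular nontrivial)
    (hgen : ∀ m n : ℤ, a ^ m = b ^ n ↔ ∃ t : ℤ, m = t * (r₁ : ℤ) ∧ n = t * (r₂ : ℤ))
    (x₀ y₀ : k) (hx₀y₀ : x₀ * y₀ ≠ 0) :
    zariskiClosure {q : Fin 2 → k | ∃ n : ℕ, q = ![(a : k) ^ n * x₀, (b : k) ^ n * y₀]} =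
      {p : Fin 2 → k | y₀ ^ r₂ * (p 0) ^ r₁ - x₀ ^ r₁ * (p 1) ^ r₂ = 0} := by
  obtain ⟨d, e₁, e₂, hd, he, rfl, rfl⟩ := Nat.exists_coprime' (Nat.gcd_pos_of_pos_left r₂ hr₁)
  have : NeZero d := ⟨hd.ne'⟩
  have ha' : ¬IsOfFinOrder a := by
    rw [isOfFinOrder_iff_pow_eq_one]
    rintro ⟨m, hm, h⟩
    exact ha m hm h
  have he₁ : e₁ ≠ 0 := (Nat.pos_of_mul_pos_right hr₁).ne'
  have he₂ : e₂ ≠ 0 := (Nat.pos_of_mul_pos_right hr₂).ne'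
  have hω : IsPrimitiveRoot ((a : k) ^ e₁ / (b : k) ^ e₂) d :=
    isPrimitiveRoot_div_pow_of_zpow_eq_zpow_iff he₁ hgen
  ext p
  refine ⟨fun hp => ?_, fun hp g hg => ?_⟩
  · have h := hp (C (y₀ ^ (e₂ * d)) * X 0 ^ (e₁ * d) - C (x₀ ^ (e₁ * d)) * X 1 ^ (e₂ * d)) ?_
    · simp only [map_sub, map_mul, map_pow, eval_C, eval_X] at h
      exact h
    rintro _ ⟨n, rfl⟩
    simp only [map_sub, map_mul, map_pow, eval_C, eval_X, Matrix.cons_val_zero, Matrix.cons_val_one]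
    linear_combination (x₀ ^ (e₁ * d) * y₀ ^ (e₂ * d)) *
      congrArg (· ^ n) (pow_eq_pow_of_isPrimitiveRoot_div_pow hω)
  · obtain ⟨n, t, rfl⟩ := exists_eq_monomialCurve_of_mem_curve hω he he₁ he₂
      (left_ne_zero_of_mul hx₀y₀) (right_ne_zero_of_mul hx₀y₀) hp
    exact eval_monomialCurve_eq_zero_of_forall_eval_orbit hω he ha' (fun n => hg _ ⟨n, rfl⟩) n t

theorem stmt19 {k : Type*} [Field k] [IsAlgClosed k] [CharZero k]
    (a b : kˣ)
    (ha : ∀ m : ℕ, 0 < m → a ^ m ≠ 1) (hb : ∀ m : ℕ, 0 < m → b ^ m ≠ 1)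
    (r₁ r₂ : ℕ) (hr₁ : 0 < r₁) (hr₂ : 0 < r₂)
    -- ((r₁, r₂) generates the subgroup {(m, n) ∈ ℤ² : aᵐ = bⁿ} of ℤ², which is in
    -- particular nontrivial)
    (hgen : ∀ m n : ℤ, a ^ m = b ^ n ↔ ∃ t : ℤ, m = t * (r₁ : ℤ) ∧ n = t * (r₂ : ℤ))
    (x₀ y₀ : k) (hx₀y₀ : x₀ * y₀ ≠ 0) :
    zariskiClosure {q : Fin 2 → k | ∃ n : ℕ, q = ![(a : k) ^ n * x₀, (b : k) ^ n * y₀]} =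
      {p : Fin 2 → k | y₀ ^ r₂ * (p 0) ^ r₁ - x₀ ^ r₁ * (p 1) ^ r₂ = 0} :=
  stmt19_general a b ha r₁ r₂ hr₁ hr₂ hgen x₀ y₀ hx₀y₀
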